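/- Let (X,d) be a metric space, f,g : X → X and F,G : X → P_fb(X) with pairs {f,F}, {g,G} occasionally weakly compatible. Let Ψ : ℝ⁺ → ℝ⁺ be nondecreasing with Ψ(t) < t for all t > 0, and let 0 < a ≤ 1 and p ≥ 1. Suppose for all x,y ∈ X: δ^p(Fx,Gy) ≤ Ψ(a·d^p(fx,gy) + (1−a)·d^{p/2}(gy,Fx)·d^{p/2}(fx,Gy)). Then f, g, F, G have a unique common fixed point. -/
import Mathlib


open Metric

/-- δ(A,B) = sup {d(a,b) : a ∈ A, b ∈ B} -/
noncomputable def setDelta {X : Type*} [MetricSpace X] (A B : Set X) : ℝ :=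
  sSup {r | ∃ a ∈ A, ∃ b ∈ B, dist a b = r}

/-- The pair (f,F) is occasionally weakly compatible. -/
def OWC {X : Type*} [MetricSpace X] (f : X → X) (F : X → Set X) : Prop :=
  ∃ u, f u ∈ F u ∧ f '' F u ⊆ F (f u)

/-- F takes values in the nonempty bounded closed subsets of X. -/
def Pfb {X : Type*} [MetricSpace X] (F : X → Set X) : Prop :=
  ∀ x, (F x).Nonempty ∧ Bornology.IsBounded (F x) ∧ IsClosed (F x)

lemma dist_le_setDelta {X : Type*} [MetricSpace X] {A B : Set X}
    (hA : Bornology.IsBounded A) (hB : Bornology.IsBounded B)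
    {x y : X} (hx : x ∈ A) (hy : y ∈ B) : dist x y ≤ setDelta A B := by
  obtain ⟨C, hC⟩ := Metric.isBounded_iff.mp (hA.union hB)
  refine le_csSup ⟨C, ?_⟩ ⟨x, hx, y, hy, rfl⟩
  rintro r ⟨a, ha, b, hb, rfl⟩
  exact hC (Set.mem_union_left _ ha) (Set.mem_union_right _ hb)

section Key

variable {X : Type*} [MetricSpace X] (f g : X → X) (F G : X → Set X)

lemma key_eq
    (hF : Pfb F) (hG : Pfb G)
    (Ψ : ℝ → ℝ) (hΨ0 : ∀ t, 0 ≤ t → 0 ≤ Ψ t)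
    (hΨmono : ∀ s t, 0 ≤ s → s ≤ t → Ψ s ≤ Ψ t) (hΨ : ∀ t : ℝ, 0 < t → Ψ t < t)
    (a : ℝ) (ha0 : 0 < a) (ha1 : a ≤ 1) (p : ℝ) (hp : 1 ≤ p)
    (hcontr : ∀ x y : X,
      (setDelta (F x) (G y)) ^ p ≤
        Ψ (a * (dist (f x) (g y)) ^ p +
          (1 - a) * (infDist (g y) (F x)) ^ (p / 2) * (infDist (f x) (G y)) ^ (p / 2)))
    (x y : X) (s t : X) (hs : s ∈ F x) (ht : t ∈ G y)
    (hfx : f x = s) (hgy : g y = t) : s = t := by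
  set D := dist s t with hD
  have hD0 : 0 ≤ D := dist_nonneg
  have hp0 : (0:ℝ) < p := lt_of_lt_of_le one_pos hp
  by_contra hne
  have hDpos : 0 < D := dist_pos.mpr hne
  have hDp : 0 < D ^ p := Real.rpow_pos_of_pos hDpos p
  -- bound the argument of Ψ by D^p
  have h1 : infDist (g y) (F x) ≤ D := by
    calc infDist (g y) (F x) ≤ dist (g y) s := infDist_le_dist_of_mem hs
    _ = D := by rw [hgy, dist_comm]
  have h2 : infDist (f x) (G y) ≤ D := by
    calc infDist (f x) (G y) ≤ dist (f x) t := infDist_le_dist_of_mem ht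
    _ = D := by rw [hfx]
  have h1' : infDist (g y) (F x) ^ (p/2) ≤ D ^ (p/2) :=
    Real.rpow_le_rpow infDist_nonneg h1 (by positivity)
  have h2' : infDist (f x) (G y) ^ (p/2) ≤ D ^ (p/2) :=
    Real.rpow_le_rpow infDist_nonneg h2 (by positivity)
  have hhalf : D ^ (p/2) * D ^ (p/2) = D ^ p := by
    rw [← Real.rpow_add hDpos]; ring_nf
  have harg : a * (dist (f x) (g y)) ^ p +
      (1 - a) * (infDist (g y) (F x)) ^ (p / 2) * (infDist (f x) (G y)) ^ (p / 2)
      ≤ D ^ p := by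
    have hfg : dist (f x) (g y) = D := by rw [hfx, hgy]
    rw [hfg]
    have hprod : (1 - a) * (infDist (g y) (F x)) ^ (p / 2) * (infDist (f x) (G y)) ^ (p / 2)
        ≤ (1 - a) * (D ^ (p/2) * D ^ (p/2)) := by
      rw [mul_assoc]
      refine mul_le_mul_of_nonneg_left ?_ (by linarith)
      exact mul_le_mul h1' h2' (Real.rpow_nonneg infDist_nonneg _)
        (Real.rpow_nonneg hD0 _)
    calc a * D ^ p + (1 - a) * (infDist (g y) (F x)) ^ (p / 2) * (infDist (f x) (G y)) ^ (p / 2)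
        ≤ a * D ^ p + (1 - a) * (D ^ (p/2) * D ^ (p/2)) := by linarith
      _ = D ^ p := by rw [hhalf]; ring
  have hargnn : 0 ≤ a * (dist (f x) (g y)) ^ p +
      (1 - a) * (infDist (g y) (F x)) ^ (p / 2) * (infDist (f x) (G y)) ^ (p / 2) := by
    have := Real.rpow_nonneg (dist_nonneg (x := f x) (y := g y)) p
    have := Real.rpow_nonneg (infDist_nonneg (x := g y) (s := F x)) (p/2)
    have := Real.rpow_nonneg (infDist_nonneg (x := f x) (s := G y)) (p/2)
    have h1a : (0:ℝ) ≤ 1 - a := by linarith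
    positivity
  have hDle : D ≤ setDelta (F x) (G y) :=
    dist_le_setDelta (hF x).2.1 (hG y).2.1 hs ht
  have hfinal : D ^ p ≤ Ψ (D ^ p) := by
    calc D ^ p ≤ (setDelta (F x) (G y)) ^ p := Real.rpow_le_rpow hD0 hDle hp0.le
      _ ≤ Ψ _ := hcontr x y
      _ ≤ Ψ (D ^ p) := hΨmono _ _ hargnn harg
  exact absurd hfinal (not_le.mpr (hΨ _ hDp))

end Key

theorem stmt11 {X : Type*} [MetricSpace X] (f g : X → X) (F G : X → Set X)
    (hF : Pfb F) (hG : Pfb G) (howc1 : OWC f F) (howc2 : OWC g G)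
    (Ψ : ℝ → ℝ) (hΨ0 : ∀ t, 0 ≤ t → 0 ≤ Ψ t)
    (hΨmono : ∀ s t, 0 ≤ s → s ≤ t → Ψ s ≤ Ψ t) (hΨ : ∀ t : ℝ, 0 < t → Ψ t < t)
    (a : ℝ) (ha0 : 0 < a) (ha1 : a ≤ 1) (p : ℝ) (hp : 1 ≤ p)
    (hcontr : ∀ x y : X,
      (setDelta (F x) (G y)) ^ p ≤
        Ψ (a * (dist (f x) (g y)) ^ p +
          (1 - a) * (infDist (g y) (F x)) ^ (p / 2) * (infDist (f x) (G y)) ^ (p / 2))) :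
    ∃! w : X, f w = w ∧ g w = w ∧ w ∈ F w ∧ w ∈ G w := by
  have key := key_eq f g F G hF hG Ψ hΨ0 hΨmono hΨ a ha0 ha1 p hp hcontr
  obtain ⟨u, hu1, hu2⟩ := howc1
  obtain ⟨v, hv1, hv2⟩ := howc2
  -- f u = g v
  have huv : f u = g v := key u v (f u) (g v) hu1 hv1 rfl rfl
  set w := f u with hw
  -- f w ∈ F w
  have hfwFw : f w ∈ F w := hu2 ⟨f u, hu1, rfl⟩
  have hgwGw : g w ∈ G w := by
    have := hv2 ⟨g v, hv1, rfl⟩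
    rwa [← huv] at this
  have hgvGv : g v ∈ G v := hv1
  -- f w = w
  have hfw : f w = w := by
    have := key w v (f w) (g v) hfwFw hgvGv rfl rfl
    rw [this, ← huv]
  -- g w = w
  have hgw : g w = w := by
    have : f u = g w := key u w (f u) (g w) hu1 hgwGw rfl rfl
    rw [← this]
  have hwFw : w ∈ F w := by simpa [hfw] using hfwFw
  have hwGw : w ∈ G w := by simpa [hgw] using hgwGw
  refine ⟨w, ⟨hfw, hgw, hwFw, hwGw⟩, ?_⟩
  rintro w' ⟨hfw', hgw', hw'F, hw'G⟩
  exact (key w w' w w' hwFw hw'G hfw hgw').symm
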